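/- Let G be a cograph on vertex set V and let U ⊆ V be nonempty. Then there exists a subset W ⊆ V such that (1) |U|/4 ≤ |U ∩ W| ≤ max(|U|/2, 1), and (2) for every vertex v ∈ V \ W, either W ⊆ N(v) or W ∩ N(v) = ∅. -/

import Mathlib

/-!
Call `W` a module of `G` if it conforms to every vertex outside it; modules of `G` and of `Gᶜ`
coincide. In a cograph every vertex set with at least two vertices induces a disconnected graph
in `G` or in `Gᶜ` (adding a vertex `x` to a disconnected set, a `P₄` appears unless the new set is
still disconnected in `G` or in `Gᶜ`). The parts of such a splitting of a module are again
modules. Now take a module `M` of minimal size with `|U| ≤ 4 |U ∩ M|` (the whole vertex set is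
one). If `|U ∩ M|` exceeded `max (|U|/2) 1`, then `M` would split into two smaller modules, one of
which still carries at least a quarter of `U`.
-/

/-- `G` is a cograph, i.e. it has no induced path on four vertices. -/
def IsCograph {V : Type*} (G : SimpleGraph V) : Prop :=
  ¬∃ a b c d : V, a ≠ c ∧ a ≠ d ∧ b ≠ d ∧
    G.Adj a b ∧ G.Adj b c ∧ G.Adj c d ∧ ¬G.Adj a c ∧ ¬G.Adj a d ∧ ¬G.Adj b d

namespace SimpleGraph

variable {V : Type*} (G : SimpleGraph V)

def IsModule (W : Finset V) : Prop :=
  ∀ v ∉ W, (∀ w ∈ W, G.Adj v w) ∨ (∀ w ∈ W, ¬G.Adj v w)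

variable {G}

theorem IsModule.compl {W : Finset V} (hW : G.IsModule W) : Gᶜ.IsModule W := by
  intro v hv
  have hne : ∀ w ∈ W, v ≠ w := fun w hw h => hv (h ▸ hw)
  rcases hW v hv with h | h
  · exact Or.inr fun w hw hadj => (compl_adj G v w).1 hadj |>.2 (h w hw)
  · exact Or.inl fun w hw => (compl_adj G v w).2 ⟨hne w hw, h w hw⟩

theorem isModule_compl {W : Finset V} : Gᶜ.IsModule W ↔ G.IsModule W :=
  ⟨fun h => compl_compl G ▸ h.compl, IsModule.compl⟩

variable (G) [DecidableEq V] in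
def IsDisconnectedOn (S : Finset V) : Prop :=
  ∃ A B : Finset V, Disjoint A B ∧ A ∪ B = S ∧ A.Nonempty ∧ B.Nonempty ∧
    ∀ a ∈ A, ∀ b ∈ B, ¬G.Adj a b

variable [DecidableEq V]

theorem IsModule.of_union_of_forall_not_adj {A B : Finset V} (hM : G.IsModule (A ∪ B))
    (hAB : ∀ a ∈ A, ∀ b ∈ B, ¬G.Adj a b) : G.IsModule A := by
  intro v hvA
  by_cases hvB : v ∈ B
  · exact Or.inr fun a ha h => hAB a ha v hvB h.symm
  · rcases hM v (by simp [hvA, hvB]) with h | h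
    · exact Or.inl fun a ha => h a (Finset.mem_union_left B ha)
    · exact Or.inr fun a ha => h a (Finset.mem_union_left B ha)

theorem IsModule.exists_split_of_isDisconnectedOn {M : Finset V} (hM : G.IsModule M)
    (hdis : G.IsDisconnectedOn M) :
    ∃ A B : Finset V, Disjoint A B ∧ A ∪ B = M ∧ A.Nonempty ∧ B.Nonempty ∧
      G.IsModule A ∧ G.IsModule B := by
  obtain ⟨A, B, hdisj, rfl, hA, hB, hAB⟩ := hdis
  refine ⟨A, B, hdisj, rfl, hA, hB, hM.of_union_of_forall_not_adj hAB, ?_⟩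
  rw [Finset.union_comm] at hM
  exact hM.of_union_of_forall_not_adj fun b hb a ha h => hAB a ha b hb h.symm

theorem isDisconnectedOn_insert {x : V} {S C : Finset V} (hx : x ∉ S) (hCS : C ⊆ S)
    (hC : C.Nonempty) (hxC : ∀ c ∈ C, ¬G.Adj x c)
    (hsep : ∀ c ∈ C, ∀ s ∈ S, s ∉ C → ¬G.Adj c s) :
    G.IsDisconnectedOn (insert x S) := by
  refine ⟨C, insert x (S \ C), ?_, ?_, hC, Finset.insert_nonempty _ _, ?_⟩
  · exact Finset.disjoint_insert_right.2 ⟨fun h => hx (hCS h), Finset.disjoint_sdiff⟩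
  · rw [Finset.union_insert, Finset.union_sdiff_of_subset hCS]
  · intro c hc b hb
    rcases Finset.mem_insert.1 hb with rfl | hb
    · exact fun h => hxC c hc h.symm
    · exact hsep c hc b (Finset.sdiff_subset hb) (Finset.mem_sdiff.1 hb).2

theorem isDisconnectedOn_insert_of_forall_not_adj {x : V} {S : Finset V} (hx : x ∉ S)
    (hS : S.Nonempty) (hxS : ∀ s ∈ S, ¬G.Adj x s) : G.IsDisconnectedOn (insert x S) :=
  isDisconnectedOn_insert hx subset_rfl hS hxS fun _ _ _ hs hs' => absurd hs hs'

end SimpleGraph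

section

open SimpleGraph

variable {V : Type*} {G : SimpleGraph V}

theorem IsCograph.compl (hG : IsCograph G) : IsCograph Gᶜ := by
  rintro ⟨a, b, c, d, hac, had, hbd, hab, hbc, hcd, hnac, hnad, hnbd⟩
  simp only [compl_adj, not_and, not_not] at hab hbc hcd hnac hnad hnbd
  exact hG ⟨c, a, d, b, hcd.1, hbc.1.symm, hab.1, (hnac hac).symm, hnad had, (hnbd hbd).symm,
    hcd.2, fun h => hbc.2 h.symm, hab.2⟩

variable [DecidableEq V]

/-- `x` has no neighbour `z ∈ B`, as `m - n - x - z` would be an induced `P₄`. -/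
theorem IsCograph.isDisconnectedOn_insert_of_adj (hG : IsCograph G) {x n m : V}
    {A B : Finset V} (hx : x ∉ A ∪ B) (hB : B.Nonempty) (hAB : ∀ a ∈ A, ∀ b ∈ B, ¬G.Adj a b)
    (hn : n ∈ A) (hm : m ∈ A ∪ B) (hxn : G.Adj x n) (hxm : ¬G.Adj x m) (hmn : G.Adj m n) :
    G.IsDisconnectedOn (insert x (A ∪ B)) := by
  have hmA : m ∈ A := by
    rcases Finset.mem_union.1 hm with hm | hm
    · exact hm
    · exact absurd hmn.symm (hAB n hn m hm)
  have hnB : n ∉ B := fun h => hAB m hmA n h hmn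
  have hxB : ∀ z ∈ B, ¬G.Adj x z := fun z hz hxz =>
    hG ⟨m, n, x, z, fun h => hx (h ▸ hm), fun h => hxm (h ▸ hxz), fun h => hnB (h ▸ hz),
      hmn, hxn.symm, hxz, fun h => hxm h.symm, hAB m hmA z hz, hAB n hn z hz⟩
  refine isDisconnectedOn_insert hx Finset.subset_union_right hB hxB fun b hb a ha haB => ?_
  exact fun h => hAB a ((Finset.mem_union.1 ha).resolve_right haB) b hb h.symm

theorem IsCograph.isDisconnectedOn_insert_or_compl (hG : IsCograph G) {x : V} {S : Finset V}
    (hx : x ∉ S) (hS : G.IsDisconnectedOn S) :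
    G.IsDisconnectedOn (insert x S) ∨ Gᶜ.IsDisconnectedOn (insert x S) := by
  classical
  obtain ⟨A, B, -, rfl, hA, hB, hAB⟩ := hS
  by_cases hfull : ∀ s ∈ A ∪ B, G.Adj x s
  · exact Or.inr (isDisconnectedOn_insert_of_forall_not_adj hx (hA.mono
      Finset.subset_union_left) fun s hs h => ((compl_adj G x s).1 h).2 (hfull s hs))
  push Not at hfull
  obtain ⟨y, hy, hxy⟩ := hfull
  by_cases hsep : ∀ n ∈ A ∪ B, ∀ m ∈ A ∪ B, G.Adj x n → ¬G.Adj x m → ¬G.Adj m n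
  · refine Or.inl (isDisconnectedOn_insert (C := (A ∪ B).filter (¬G.Adj x ·)) hx
      (Finset.filter_subset _ _) ⟨y, Finset.mem_filter.2 ⟨hy, hxy⟩⟩
      (fun c hc => (Finset.mem_filter.1 hc).2) fun c hc s hs hsC => ?_)
    rw [Finset.mem_filter, not_and, not_not] at hsC
    exact hsep s hs c (Finset.mem_filter.1 hc).1 (hsC hs) (Finset.mem_filter.1 hc).2
  push Not at hsep
  obtain ⟨n, hn, m, hm, hxn, hxm, hmn⟩ := hsep
  refine Or.inl ?_
  rcases Finset.mem_union.1 hn with hnA | hnB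
  · exact hG.isDisconnectedOn_insert_of_adj hx hB hAB hnA hm hxn hxm hmn
  · rw [Finset.union_comm] at hx hm ⊢
    exact hG.isDisconnectedOn_insert_of_adj hx hA (fun b hb a ha h => hAB a ha b hb h.symm)
      hnB hm hxn hxm hmn

theorem IsCograph.isDisconnectedOn_or_compl (hG : IsCograph G) {S : Finset V}
    (hS : 2 ≤ S.card) : G.IsDisconnectedOn S ∨ Gᶜ.IsDisconnectedOn S := by
  induction S using Finset.induction_on with
  | empty => simp at hS
  | @insert x S hx ih =>
    rw [Finset.card_insert_of_notMem hx] at hS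
    by_cases hS2 : 2 ≤ S.card
    · rcases ih hS2 with h | h
      · exact hG.isDisconnectedOn_insert_or_compl hx h
      · simpa only [compl_compl, or_comm] using hG.compl.isDisconnectedOn_insert_or_compl hx h
    obtain ⟨y, rfl⟩ := Finset.card_eq_one.1 (show S.card = 1 by omega)
    have hy := Finset.singleton_nonempty y
    by_cases h : G.Adj x y
    · exact Or.inr (isDisconnectedOn_insert_of_forall_not_adj hx hy (by simpa using fun _ => h))
    · exact Or.inl (isDisconnectedOn_insert_of_forall_not_adj hx hy (by simpa using h))

theorem IsCograph.exists_isModule_split (hG : IsCograph G) {M : Finset V} (hM : G.IsModule M)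
    (hM2 : 2 ≤ M.card) :
    ∃ A B : Finset V, Disjoint A B ∧ A ∪ B = M ∧ A.Nonempty ∧ B.Nonempty ∧
      G.IsModule A ∧ G.IsModule B := by
  rcases hG.isDisconnectedOn_or_compl hM2 with h | h
  · exact hM.exists_split_of_isDisconnectedOn h
  · simpa only [isModule_compl] using hM.compl.exists_split_of_isDisconnectedOn h

theorem IsCograph.exists_isModule_card_inter [Fintype V] (hG : IsCograph G) (U : Finset V) :
    ∃ W : Finset V, G.IsModule W ∧ U.card ≤ 4 * (U ∩ W).card ∧
      2 * (U ∩ W).card ≤ max U.card 2 := by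
  obtain ⟨M, ⟨hM, hUM⟩, hmin⟩ := (measure Finset.card).wf.has_min
    {M | G.IsModule M ∧ U.card ≤ 4 * (U ∩ M).card}
    ⟨Finset.univ, fun v hv => absurd (Finset.mem_univ v) hv, by rw [Finset.inter_univ]; omega⟩
  refine ⟨M, hM, hUM, ?_⟩
  by_contra! hbig
  have hM2 : 2 ≤ M.card := by
    have := Finset.card_le_card (Finset.inter_subset_right (s₁ := U) (s₂ := M))
    omega
  obtain ⟨A, B, hdisj, rfl, hA, hB, hAmod, hBmod⟩ := hG.exists_isModule_split hM hM2
  have hcard : (A ∪ B).card = A.card + B.card := Finset.card_union_of_disjoint hdisj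
  have hUcard : (U ∩ (A ∪ B)).card = (U ∩ A).card + (U ∩ B).card := by
    rw [Finset.inter_union_distrib_left, Finset.card_union_of_disjoint
      (hdisj.mono Finset.inter_subset_right Finset.inter_subset_right)]
  have hUA : 4 * (U ∩ A).card < U.card := lt_of_not_ge fun h =>
    hmin A ⟨hAmod, h⟩ (show A.card < (A ∪ B).card by have := hB.card_pos; omega)
  have hUB : 4 * (U ∩ B).card < U.card := lt_of_not_ge fun h =>
    hmin B ⟨hBmod, h⟩ (show B.card < (A ∪ B).card by have := hA.card_pos; omega)
  omega

end

theorem stmt_3_general {V : Type*} [Fintype V] [DecidableEq V] (G : SimpleGraph V)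
    (hG : IsCograph G) (U : Finset V) :
    ∃ W : Finset V,
      (U.card : ℝ) / 4 ≤ ((U ∩ W).card : ℝ) ∧
      ((U ∩ W).card : ℝ) ≤ max ((U.card : ℝ) / 2) 1 ∧
      ∀ v ∉ W, (∀ w ∈ W, G.Adj v w) ∨ (∀ w ∈ W, ¬G.Adj v w) := by
  obtain ⟨W, hW, hlow, hhigh⟩ := hG.exists_isModule_card_inter U
  refine ⟨W, ?_, ?_, hW⟩
  · have : (U.card : ℝ) ≤ 4 * (U ∩ W).card := by exact_mod_cast hlow
    linarith
  · have : 2 * ((U ∩ W).card : ℝ) ≤ max (U.card : ℝ) 2 := by exact_mod_cast hhigh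
    rcases max_cases (U.card : ℝ) 2 with ⟨h, -⟩ | ⟨h, -⟩ <;> rw [h] at this
    · exact le_max_of_le_left (by linarith)
    · exact le_max_of_le_right (by linarith)

/-- for a cograph `G` and nonempty `U ⊆ V` there is `W ⊆ V` with
`|U|/4 ≤ |U ∩ W| ≤ max(|U|/2, 1)` such that `W` conforms to every vertex outside `W`. -/
theorem stmt_3 {V : Type*} [Fintype V] [DecidableEq V] (G : SimpleGraph V)
    (hG : IsCograph G) (U : Finset V) (hU : U.Nonempty) :
    ∃ W : Finset V,
      (U.card : ℝ) / 4 ≤ ((U ∩ W).card : ℝ) ∧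
      ((U ∩ W).card : ℝ) ≤ max ((U.card : ℝ) / 2) 1 ∧
      ∀ v ∉ W, (∀ w ∈ W, G.Adj v w) ∨ (∀ w ∈ W, ¬G.Adj v w) :=
  stmt_3_general G hG U
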